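/- arXiv:1506.06184 — 2 statements merged into one kernel-verified Lean document; each statement's English description precedes it below -/
import Mathlib

section
/- Suppose ≤ is a total order on Λ. Every element g of a pattern subgroup M(Γ) of the McLain group, written uniquely as g = 1 + Σ_{(α,β)∈S(g)} r_{αβ} e_{αβ} with finite S(g) ⊆ Γ and nonzero r_{αβ} ∈ R, equals the product of the factors (1 + r_{αβ} e_{αβ}) taken in decreasing order with respect to the total order ⪯ on Φ defined by (α,β) ⪯ (γ,δ) iff β < δ, or β = δ and α ≤ γ. -/
/-!
If `p` precedes `q` in a `⪯`-decreasing list then `q.2 ≤ p.2`, and `q.1 < q.2`, so `p.2 ≠ q.1` and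
`e_p e_q = 0`. Expanding the product of the factors `1 + r_p e_p` in list order, every term with two
or more `e`'s contains such a product, so only `1 + ∑ r_p e_p` survives.
-/

namespace McLain

/-- The endomorphism ring of the free right `R`-module on `Λ`. -/
abbrev E (R : Type*) [Ring R] (Λ : Type*) := Module.End Rᵐᵒᵖ (Λ →₀ R)

/-- Left multiplication by `r`, as an endomorphism of the right `R`-module `R`. -/
def lmul {R : Type*} [Ring R] (r : R) : R →ₗ[Rᵐᵒᵖ] R where
  toFun s := r * s
  map_add' := fun a b => mul_add r a b
  map_smul' := fun m s => by
    simp [MulOpposite.smul_eq_mul_unop, mul_assoc]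

/-- The endomorphism corresponding to `r e_{αβ}`. -/
noncomputable def elt {R : Type*} [Ring R] {Λ : Type*} (α β : Λ) (r : R) : E R Λ :=
  (Finsupp.lsingle α).comp ((lmul r).comp (Finsupp.lapply β))

/-- The unit `1 + r e_{αβ}` of `E`, for `α < β` (its inverse is `1 - r e_{αβ}`). -/
noncomputable def rootUnit {R : Type*} [Ring R] {Λ : Type*} [PartialOrder Λ]
    {α β : Λ} (h : α < β) (r : R) : (E R Λ)ˣ where
  val := 1 + elt α β r
  inv := 1 + elt α β (-r)
  val_inv := by
    apply LinearMap.ext; intro x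
    simp [elt, lmul, Module.End.mul_apply, Finsupp.single_apply, h.ne, mul_add, add_assoc]
  inv_val := by
    apply LinearMap.ext; intro x
    simp [elt, lmul, Module.End.mul_apply, Finsupp.single_apply, h.ne, mul_add, add_assoc]

/-- The pattern subgroup `M(Γ) = ⟨M_{αβ} : (α,β) ∈ Γ⟩`. -/
noncomputable def patternSubgroup (R : Type*) [Ring R] (Λ : Type*) [PartialOrder Λ]
    (Γ : Set (Λ × Λ)) : Subgroup (E R Λ)ˣ :=
  Subgroup.closure {u | ∃ (α β : Λ) (h : α < β), (α, β) ∈ Γ ∧ ∃ r : R, u = rootUnit h r}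


/-- The total order `⪯` on `Φ`: `(α,β) ⪯ (γ,δ)` iff `β < δ`, or `β = δ` and `α ≤ γ`. -/
def ple {Λ : Type*} [LinearOrder Λ] (p q : Λ × Λ) : Prop :=
  p.2 < q.2 ∨ (p.2 = q.2 ∧ p.1 ≤ q.1)

/-- A subset `Γ ⊆ Φ` is closed if `(α,β),(β,γ) ∈ Γ` implies `(α,γ) ∈ Γ`. -/
def IsClosedSubset {Λ : Type*} [PartialOrder Λ] (Γ : Set (Λ × Λ)) : Prop :=
  ∀ α β γ : Λ, (α, β) ∈ Γ → (β, γ) ∈ Γ → (α, γ) ∈ Γ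

theorem _root_.List.prod_map_one_add_of_pairwise_mul_eq_zero {ι A : Type*} [Semiring A]
    (f : ι → A) : ∀ {l : List ι}, l.Pairwise (fun i j => f i * f j = 0) →
      (l.map fun i => 1 + f i).prod = 1 + (l.map f).sum
  | [], _ => by simp
  | a :: t, h => by
    rw [List.pairwise_cons] at h
    have ha_mul_sum : f a * (t.map f).sum = 0 := by
      rw [← List.sum_map_mul_left]
      exact List.sum_eq_zero (by simpa using h.1)
    rw [List.map_cons, List.prod_cons, List.prod_map_one_add_of_pairwise_mul_eq_zero f h.2,
      List.map_cons, List.sum_cons, add_mul, one_mul, mul_add, mul_one, ha_mul_sum, add_zero,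
      add_comm (f a), add_assoc]

@[simp]
theorem val_rootUnit {R : Type*} [Ring R] {Λ : Type*} [PartialOrder Λ] {α β : Λ} (h : α < β)
    (r : R) : (rootUnit h r : E R Λ) = 1 + elt α β r :=
  rfl

theorem elt_mul_elt_of_ne {R : Type*} [Ring R] {Λ : Type*} {α β γ δ : Λ} (hβγ : β ≠ γ)
    (r s : R) : (elt α β r * elt γ δ s : E R Λ) = 0 := by
  classical
  ext
  simp [elt, lmul, Finsupp.single_apply, hβγ.symm]

theorem elt_mul_elt_of_ple {R : Type*} [Ring R] {Λ : Type*} [LinearOrder Λ] {p q : Λ × Λ}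
    (hq : q.1 < q.2) (hqp : ple q p) (r s : R) : (elt p.1 p.2 r * elt q.1 q.2 s : E R Λ) = 0 := by
  have hq₂p₂ : q.2 ≤ p.2 := hqp.elim le_of_lt fun h => h.1.le
  exact elt_mul_elt_of_ne (hq.trans_le hq₂p₂).ne' r s

theorem patternSubgroup_prod_decreasing_general (R : Type*) [Ring R]
    (Λ : Type*) [LinearOrder Λ]
    (S : Finset (Λ × Λ))
    (r : Λ × Λ → R)
    (l : List (Λ × Λ)) (hlS : l.toFinset = S) (hnd : l.Nodup)
    (hsorted : l.Pairwise fun p q => ple q p)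
    (hlt : ∀ p ∈ l, p.1 < p.2) :
    ((l.attach.map fun p => rootUnit (R := R) (hlt p.1 p.2) (r p.1)).prod : E R Λ) =
      1 + ∑ p ∈ S, elt p.1 p.2 (r p) := by
  have hvanish : l.Pairwise fun p q => elt p.1 p.2 (r p) * elt q.1 q.2 (r q) = (0 : E R Λ) :=
    hsorted.imp_of_mem fun _ hq hqp => elt_mul_elt_of_ple (hlt _ hq) hqp _ _
  rw [← Units.coeHom_apply, map_list_prod, List.map_map]
  simp only [Function.comp_def, Units.coeHom_apply, val_rootUnit]
  rw [List.attach_map_val (f := fun p => 1 + elt p.1 p.2 (r p)),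
    List.prod_map_one_add_of_pairwise_mul_eq_zero _ hvanish, ← hlS, List.sum_toFinset _ hnd]

/-- Suppose `≤` is a total order on `Λ` and `Γ ⊆ Φ` is closed.  If
`g = 1 + ∑_{(α,β) ∈ S} r_{αβ} e_{αβ}` with `S ⊆ Γ` finite and all `r_{αβ} ≠ 0` (the
unique such expression for `g ∈ M(Γ)`), then `g` is the product of the factors
`1 + r_{αβ} e_{αβ}` taken in decreasing `⪯`-order.  Here `l` is the enumeration of
`S` in decreasing `⪯`-order. -/
theorem patternSubgroup_prod_decreasing (R : Type*) [Ring R] [Nontrivial R]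
    (Λ : Type*) [LinearOrder Λ] (Γ : Set (Λ × Λ))
    (hΦ : Γ ⊆ {p : Λ × Λ | p.1 < p.2}) (hΓ : IsClosedSubset Γ)
    (S : Finset (Λ × Λ)) (hS : ↑S ⊆ Γ)
    (r : Λ × Λ → R) (hr : ∀ p ∈ S, r p ≠ 0)
    (l : List (Λ × Λ)) (hlS : l.toFinset = S) (hnd : l.Nodup)
    (hsorted : l.Pairwise fun p q => ple q p)
    (hlt : ∀ p ∈ l, p.1 < p.2) :
    ((l.attach.map fun p => rootUnit (R := R) (hlt p.1 p.2) (r p.1)).prod : E R Λ) =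
      1 + ∑ p ∈ S, elt p.1 p.2 (r p) :=
  patternSubgroup_prod_decreasing_general R Λ S r l hlS hnd hsorted hlt

end McLain
end

section
/- With Λ totally ordered, D a basic subset of Φ, Γ and Ω and Γ₁ = Γ ∪ Ω as defined, the pattern subgroup H = M(Γ) is a normal subgroup of I = M(Γ₁), and if R is finite then [I : H] = |R|^{|Ω|}. -/
/-!
Write `ent f a b` for the matrix entries of `f ∈ E R Λ`. If `S ⊆ Φ` is closed under composition,
then `M(S)` consists exactly of the units `u` for which `u - 1` has finitely many nonzero entries,
all in `S`: generators have this form, products keep it because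
`uv - 1 = (u - 1) + (v - 1) + (u - 1)(v - 1)`, and conversely such a `u` is reduced to `1` by left
multiplication with generators, each time clearing the nonzero entry in the rightmost column.

As `D` is basic, `Γ₁ = Γ ∪ Ω` is closed and both `Γ₁ Γ` and `Γ Γ₁` lie in `Γ`. Hence conjugating
an element of `M(Γ)` by `M(Γ₁)` keeps `u - 1` inside `Γ`, and `u, v ∈ M(Γ₁)` lie in the same left
coset of `M(Γ)` exactly when `u - 1` and `v - 1` agree on `Ω`. Any prescribed entries on the finite
set `Ω` are attained by a suitably ordered product of generators, so the cosets correspond to `R^Ω`.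
-/

namespace McLain

open scoped SetRel

section RingIdentities

/- These are stated in an arbitrary ring because on `E R Λ` instance search finds `LinearMap`'s
subtraction, which `rw`, `simp` and `noncomm_ring` do not match against the ring's; they are
applied as terms. -/
variable {A : Type*} [Ring A]

lemma mul_eq_add_sub_one_mul (x y : A) : x * y = y + (x - 1) * y := by noncomm_ring

lemma mul_eq_add_mul_sub_one (x y : A) : x * y = x + x * (y - 1) := by noncomm_ring

lemma mul_sub_one_eq_add (x y : A) : x * y - 1 = (x - 1) + x * (y - 1) := by noncomm_ring

lemma one_add_mul_sub_one (e x : A) : (1 + e) * x - 1 = e + (x - 1) + e * (x - 1) := by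
  noncomm_ring

lemma mul_one_add_sub_one (x e : A) : x * (1 + e) - 1 = (x - 1) + e + (x - 1) * e := by
  noncomm_ring

lemma sub_eq_mul_mul_sub_one {x y : A} (h : x * y = 1) (z : A) : z - x = x * (y * z - 1) := by
  rw [mul_sub, ← mul_assoc, h, one_mul, mul_one]

lemma mul_sub_one_eq_mul_sub {x y : A} (h : y * x = 1) (z : A) : y * z - 1 = y * (z - x) := by
  rw [mul_sub, h]

lemma mul_mul_sub_one_eq {x y : A} (h : x * y = 1) (z : A) : x * z * y - 1 = x * (z - 1) * y := by
  rw [mul_sub, sub_mul, mul_one, h]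

end RingIdentities

section Entries

variable {R : Type*} [Ring R] {Λ : Type*}

noncomputable def ent (f : E R Λ) (a b : Λ) : R := f (Finsupp.single b 1) a

lemma ent_add (f g : E R Λ) (a b : Λ) : ent (f + g) a b = ent f a b + ent g a b := rfl

lemma ent_sub (f g : E R Λ) (a b : Λ) : ent (f - g) a b = ent f a b - ent g a b := rfl

@[simp] lemma ent_zero (a b : Λ) : ent (0 : E R Λ) a b = 0 := rfl

lemma apply_single_apply (f : E R Λ) (b : Λ) (c : R) (a : Λ) :
    f (Finsupp.single b c) a = ent f a b * c := by
  have : (Finsupp.single b c : Λ →₀ R) = MulOpposite.op c • Finsupp.single b 1 := by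
    simp [Finsupp.smul_single, MulOpposite.smul_eq_mul_unop]
  rw [this, map_smul]
  simp [ent, MulOpposite.smul_eq_mul_unop]

lemma ext_ent {f g : E R Λ} (h : ∀ a b, ent f a b = ent g a b) : f = g :=
  Finsupp.lhom_ext fun b c => Finsupp.ext fun a => by
    rw [apply_single_apply, apply_single_apply, h]

lemma ent_mul (f g : E R Λ) (a c : Λ) :
    ent (f * g) a c = ∑ b ∈ (g (Finsupp.single c 1)).support, ent f a b * ent g b c := by
  conv_lhs => rw [ent, Module.End.mul_apply, ← Finsupp.sum_single (g _)]
  simp only [Finsupp.sum, map_sum, Finsupp.finsetSum_apply, apply_single_apply, mul_one]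

variable [DecidableEq Λ]

lemma ent_elt (α β : Λ) (r : R) (a b : Λ) :
    ent (elt α β r) a b = if a = α ∧ b = β then r else 0 := by
  by_cases hb : b = β
  · subst hb
    simp [ent, elt, lmul, Finsupp.single_apply, eq_comm]
  · simp [ent, elt, hb, Ne.symm hb]

lemma ent_elt_mul (α β : Λ) (s : R) (f : E R Λ) (a b : Λ) :
    ent (elt α β s * f) a b = if a = α then s * ent f β b else 0 := by
  by_cases ha : a = α
  · subst ha
    simp [ent, elt, lmul]
  · simp [ent, elt, ha]

lemma ent_mul_elt (f : E R Λ) (α β : Λ) (s : R) (a b : Λ) :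
    ent (f * elt α β s) a b = if b = β then ent f a α * s else 0 := by
  by_cases hb : b = β
  · subst hb
    simp only [ent, Module.End.mul_apply, elt, lmul, LinearMap.comp_apply, Finsupp.lapply_apply,
      Finsupp.lsingle_apply, LinearMap.coe_mk, AddHom.coe_mk, Finsupp.single_eq_same, mul_one]
    exact apply_single_apply f α s a
  · simp [ent, elt, hb, Ne.symm hb]

end Entries

section Support

variable {R : Type*} [Ring R] {Λ : Type*}

def entrySupport (f : E R Λ) : Set (Λ × Λ) := Function.support fun p => ent f p.1 p.2

lemma mem_entrySupport {f : E R Λ} {p : Λ × Λ} : p ∈ entrySupport f ↔ ent f p.1 p.2 ≠ 0 :=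
  Iff.rfl

lemma entrySupport_add (f g : E R Λ) : entrySupport (f + g) ⊆ entrySupport f ∪ entrySupport g :=
  Function.support_add _ _

lemma entrySupport_sub (f g : E R Λ) : entrySupport (f - g) ⊆ entrySupport f ∪ entrySupport g :=
  Function.support_sub _ _

lemma entrySupport_mul (f g : E R Λ) :
    entrySupport (f * g) ⊆ entrySupport f ○ entrySupport g := by
  rintro ⟨a, c⟩ h
  rw [mem_entrySupport, ent_mul] at h
  obtain ⟨b, -, hb⟩ := Finset.exists_ne_zero_of_sum_ne_zero h
  exact ⟨b, left_ne_zero_of_mul hb, right_ne_zero_of_mul hb⟩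

lemma entrySupport_elt [DecidableEq Λ] (α β : Λ) (r : R) :
    entrySupport (elt α β r) ⊆ {(α, β)} := by
  rintro ⟨a, b⟩ h
  by_contra hab
  simp only [Set.mem_singleton_iff, Prod.mk.injEq] at hab
  exact mem_entrySupport.mp h (by rw [ent_elt, if_neg hab])

lemma eq_zero_of_entrySupport_eq_empty {f : E R Λ} (h : entrySupport f = ∅) : f = 0 :=
  ext_ent fun a b => not_not.mp fun hab => (h ▸ hab : (a, b) ∈ (∅ : Set (Λ × Λ)))

def FinitelySupportedIn (S : Set (Λ × Λ)) (f : E R Λ) : Prop :=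
  entrySupport f ⊆ S ∧ (entrySupport f).Finite

namespace FinitelySupportedIn

variable {S T U : Set (Λ × Λ)} {f g x : E R Λ}

lemma zero : FinitelySupportedIn S (0 : E R Λ) := by
  have : entrySupport (0 : E R Λ) = ∅ := by simp [entrySupport]
  exact ⟨this ▸ Set.empty_subset S, this ▸ Set.finite_empty⟩

lemma elt [DecidableEq Λ] {α β : Λ} (h : (α, β) ∈ S) (r : R) :
    FinitelySupportedIn S (elt α β r) :=
  ⟨(entrySupport_elt α β r).trans (Set.singleton_subset_iff.mpr h),
    (Set.finite_singleton _).subset (entrySupport_elt α β r)⟩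

lemma add (hf : FinitelySupportedIn S f) (hg : FinitelySupportedIn S g) :
    FinitelySupportedIn S (f + g) :=
  ⟨(entrySupport_add f g).trans (Set.union_subset hf.1 hg.1),
    (hf.2.union hg.2).subset (entrySupport_add f g)⟩

lemma sub (hf : FinitelySupportedIn S f) (hg : FinitelySupportedIn S g) :
    FinitelySupportedIn S (f - g) :=
  ⟨(entrySupport_sub f g).trans (Set.union_subset hf.1 hg.1),
    (hf.2.union hg.2).subset (entrySupport_sub f g)⟩

lemma mul (hf : FinitelySupportedIn S f) (hg : FinitelySupportedIn T g) (hST : S ○ T ⊆ U) :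
    FinitelySupportedIn U (f * g) := by
  refine ⟨(entrySupport_mul f g).trans ((SetRel.comp_subset_comp hf.1 hg.1).trans hST),
    Set.Finite.subset ?_ (entrySupport_mul f g)⟩
  refine ((hf.2.prod hg.2).image fun q => (q.1.1, q.2.2)).subset ?_
  rintro ⟨a, c⟩ ⟨b, hab, hbc⟩
  exact ⟨((a, b), (b, c)), ⟨hab, hbc⟩, rfl⟩

lemma mul_left (hf : FinitelySupportedIn S f) (hx : FinitelySupportedIn T (x - 1))
    (hTS : T ○ S ⊆ S) : FinitelySupportedIn S (x * f) := by
  have : x * f = f + (x - 1) * f := mul_eq_add_sub_one_mul x f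
  exact this ▸ hf.add (hx.mul hf hTS)

lemma mul_right (hf : FinitelySupportedIn S f) (hx : FinitelySupportedIn T (x - 1))
    (hST : S ○ T ⊆ S) : FinitelySupportedIn S (f * x) := by
  have : f * x = f + f * (x - 1) := mul_eq_add_mul_sub_one f x
  exact this ▸ hf.add (hf.mul hx hST)

lemma mul_sub_one {x y : E R Λ} (hx : FinitelySupportedIn S (x - 1))
    (hy : FinitelySupportedIn S (y - 1)) (hSS : S ○ S ⊆ S) :
    FinitelySupportedIn S (x * y - 1) := by
  have : x * y - 1 = (x - 1) + x * (y - 1) := mul_sub_one_eq_add x y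
  exact this ▸ hx.add (hy.mul_left hx hSS)

end FinitelySupportedIn

lemma finitelySupportedIn_sub_iff {S Ω : Set (Λ × Λ)} {f g : E R Λ}
    (hf : FinitelySupportedIn (S ∪ Ω) f) (hg : FinitelySupportedIn (S ∪ Ω) g) (hSΩ : Disjoint S Ω) :
    FinitelySupportedIn S (g - f) ↔ ∀ p ∈ Ω, ent f p.1 p.2 = ent g p.1 p.2 := by
  have hgf := hg.sub hf
  refine ⟨fun h p hpΩ => ?_, fun h => ⟨fun p hp => ?_, hgf.2⟩⟩
  · refine (sub_eq_zero.mp (not_not.mp fun hp => ?_)).symm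
    exact hSΩ.notMem_of_mem_left (h.1 (show p ∈ entrySupport (g - f) from hp)) hpΩ
  · refine (hgf.1 hp).resolve_right fun hpΩ => hp ?_
    show ent (g - f) p.1 p.2 = 0
    rw [ent_sub, h p hpΩ, sub_self]

end Support

section PatternSubgroup

variable {R : Type*} [Ring R] {Λ : Type*} {S : Set (Λ × Λ)}

section PartialOrder

variable [PartialOrder Λ]

lemma rootUnit_inv {α β : Λ} (h : α < β) (r : R) : (rootUnit h r)⁻¹ = rootUnit h (-r) :=
  Units.ext rfl

lemma rootUnit_mem_patternSubgroup {α β : Λ} (h : α < β) (hS : (α, β) ∈ S) (r : R) :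
    rootUnit h r ∈ patternSubgroup R Λ S :=
  Subgroup.subset_closure ⟨α, β, h, hS, r, rfl⟩

lemma finitelySupportedIn_sub_one_of_mem (hSS : S ○ S ⊆ S) {u : (E R Λ)ˣ}
    (hu : u ∈ patternSubgroup R Λ S) : FinitelySupportedIn S ((u : E R Λ) - 1) := by
  classical
  have generator : ∀ {α β : Λ} (h : α < β), (α, β) ∈ S → ∀ r : R,
      FinitelySupportedIn S ((rootUnit h r : E R Λ) - 1) := fun h hαβ r => by
    have : (rootUnit h r : E R Λ) - 1 = elt _ _ r := add_sub_cancel_left (1 : E R Λ) _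
    exact this ▸ .elt hαβ r
  induction hu using Subgroup.closure_induction'' with
  | mem x hx =>
    obtain ⟨α, β, h, hαβ, r, rfl⟩ := hx
    exact generator h hαβ r
  | inv_mem x hx =>
    obtain ⟨α, β, h, hαβ, r, rfl⟩ := hx
    exact rootUnit_inv h r ▸ generator h hαβ (-r)
  | one =>
    have : ((1 : (E R Λ)ˣ) : E R Λ) - 1 = 0 := sub_self (1 : E R Λ)
    exact this ▸ .zero
  | mul x y _ _ hx hy => exact Units.val_mul x y ▸ hx.mul_sub_one hy hSS

lemma entrySupport_rootUnit_inv_mul_sub_one_subset {α β : Λ} (h : α < β) {u : (E R Λ)ˣ}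
    (hrow : ∀ c, ent ((u : E R Λ) - 1) β c = 0) :
    entrySupport ((((rootUnit h (ent ((u : E R Λ) - 1) α β))⁻¹ * u : (E R Λ)ˣ) : E R Λ) - 1) ⊆
      entrySupport ((u : E R Λ) - 1) \ {(α, β)} := by
  classical
  set r := ent ((u : E R Λ) - 1) α β
  have hval : (((rootUnit h r)⁻¹ * u : (E R Λ)ˣ) : E R Λ) - 1 =
      elt α β (-r) + ((u : E R Λ) - 1) + elt α β (-r) * ((u : E R Λ) - 1) := by
    rw [rootUnit_inv, Units.val_mul]
    exact one_add_mul_sub_one (elt α β (-r)) (u : E R Λ)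
  rintro ⟨a, b⟩ hab
  rw [mem_entrySupport, hval, ent_add, ent_add, ent_elt, ent_elt_mul, hrow, mul_zero, ite_self,
    add_zero] at hab
  by_cases hp : a = α ∧ b = β
  · obtain ⟨rfl, rfl⟩ := hp
    rw [if_pos ⟨rfl, rfl⟩] at hab
    exact absurd (neg_add_cancel r) hab
  · rw [if_neg hp, zero_add] at hab
    exact ⟨hab, fun h' => hp (Prod.mk.inj h')⟩

end PartialOrder

variable [LinearOrder Λ]

lemma mem_patternSubgroup_of_finitelySupportedIn (hS : ∀ p ∈ S, p.1 < p.2) {u : (E R Λ)ˣ}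
    (hu : FinitelySupportedIn S ((u : E R Λ) - 1)) : u ∈ patternSubgroup R Λ S := by
  classical
  suffices key : ∀ (T : Finset (Λ × Λ)) (u : (E R Λ)ˣ), entrySupport ((u : E R Λ) - 1) ⊆ S →
      entrySupport ((u : E R Λ) - 1) ⊆ T → u ∈ patternSubgroup R Λ S from
    key hu.2.toFinset u hu.1 hu.2.coe_toFinset.ge
  intro T
  -- clear the nonzero entry of `u - 1` lying in the rightmost column
  induction T using Finset.induction_on_max_value (fun p : Λ × Λ => p.2) with
  | empty =>
    intro u _ hT
    have : (u : E R Λ) - 1 = 0 := eq_zero_of_entrySupport_eq_empty (by simpa using hT)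
    rw [Units.val_eq_one.mp (eq_of_sub_eq_zero this : (u : E R Λ) = 1)]
    exact one_mem _
  | insert a T _ hmax ih =>
    intro u huS huT
    have mem_T : ∀ p ∈ entrySupport ((u : E R Λ) - 1), p ≠ a → p ∈ T := fun p hp hpa =>
      (Finset.mem_insert.mp (huT hp)).resolve_left hpa
    by_cases ha : a ∈ entrySupport ((u : E R Λ) - 1)
    swap
    · exact ih u huS fun p hp => mem_T p hp fun hpa => ha (hpa ▸ hp)
    have hlt := hS a (huS ha)
    have hrow : ∀ c, ent ((u : E R Λ) - 1) a.2 c = 0 := fun c => by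
      by_contra hc
      replace hc : (a.2, c) ∈ entrySupport ((u : E R Λ) - 1) := hc
      have hle : c ≤ a.2 := by
        rcases Finset.mem_insert.mp (huT hc) with h | h
        · exact (congrArg Prod.snd h).le
        · exact hmax _ h
      exact (hS _ (huS hc)).not_ge hle
    set r := ent ((u : E R Λ) - 1) a.1 a.2
    set v := (rootUnit hlt r)⁻¹ * u
    have hsupp := entrySupport_rootUnit_inv_mul_sub_one_subset hlt hrow
    have hvS := ih v (hsupp.trans (Set.sdiff_subset.trans huS)) fun p hp =>
      mem_T p (hsupp hp).1 (hsupp hp).2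
    rw [← mul_inv_cancel_left (rootUnit hlt r) u]
    exact mul_mem (rootUnit_mem_patternSubgroup hlt (huS ha) r) hvS

theorem mem_patternSubgroup_iff (hS : ∀ p ∈ S, p.1 < p.2) (hSS : S ○ S ⊆ S) {u : (E R Λ)ˣ} :
    u ∈ patternSubgroup R Λ S ↔ FinitelySupportedIn S ((u : E R Λ) - 1) :=
  ⟨finitelySupportedIn_sub_one_of_mem hSS, mem_patternSubgroup_of_finitelySupportedIn hS⟩

end PatternSubgroup

section Cosets

variable {R : Type*} [Ring R] {Λ : Type*} [LinearOrder Λ] {S T : Set (Λ × Λ)}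

lemma ent_sub_one_eq_zero_of_le (hT : ∀ p ∈ T, p.1 < p.2) (hTT : T ○ T ⊆ T) {u : (E R Λ)ˣ}
    (hu : u ∈ patternSubgroup R Λ T) {a b : Λ} (hba : b ≤ a) : ent ((u : E R Λ) - 1) a b = 0 :=
  not_not.mp fun (h : (a, b) ∈ entrySupport _) =>
    (hT _ (((mem_patternSubgroup_iff hT hTT).mp hu).1 h)).not_ge hba

lemma exists_mem_patternSubgroup_ent_eq (hT : ∀ p ∈ T, p.1 < p.2) (hTT : T ○ T ⊆ T)
    (s : Finset (Λ × Λ)) (hs : ↑s ⊆ T) (r : Λ × Λ → R) :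
    ∃ u ∈ patternSubgroup R Λ T, ∀ p ∈ s, ent ((u : E R Λ) - 1) p.1 p.2 = r p := by
  classical
  -- right multiplication by `1 + c e_a` only changes column `a.2` above row `a.1`
  induction s using Finset.induction_on_max_value
    (fun p : Λ × Λ => toLex (p.2, OrderDual.toDual p.1)) with
  | empty => exact ⟨1, one_mem _, by simp⟩
  | insert a s has hmax ih =>
    obtain ⟨u, hu, hus⟩ := ih ((Finset.coe_subset.mpr (Finset.subset_insert a s)).trans hs)
    have hlt := hT a (hs (Finset.mem_insert_self a s))
    set c := r a - ent ((u : E R Λ) - 1) a.1 a.2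
    refine ⟨u * rootUnit hlt c,
      mul_mem hu (rootUnit_mem_patternSubgroup hlt (hs (Finset.mem_insert_self a s)) c), ?_⟩
    have hval : ((u * rootUnit hlt c : (E R Λ)ˣ) : E R Λ) - 1 =
        ((u : E R Λ) - 1) + elt a.1 a.2 c + ((u : E R Λ) - 1) * elt a.1 a.2 c := by
      rw [Units.val_mul]
      exact mul_one_add_sub_one (u : E R Λ) (elt a.1 a.2 c)
    intro p hp
    rw [hval, ent_add, ent_add, ent_elt, ent_mul_elt]
    rcases Finset.mem_insert.mp hp with rfl | hps
    · rw [if_pos ⟨rfl, rfl⟩, if_pos rfl, ent_sub_one_eq_zero_of_le hT hTT hu le_rfl, zero_mul,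
        add_sub_cancel, add_zero]
    · have hpa : p ≠ a := fun h => has (h ▸ hps)
      have hcol : p.2 = a.2 → ent ((u : E R Λ) - 1) p.1 a.1 = 0 := fun h2 => by
        have := hmax p hps
        rw [h2, Prod.Lex.toLex_le_toLex] at this
        exact ent_sub_one_eq_zero_of_le hT hTT hu (by simpa using this)
      rw [if_neg fun h => hpa (Prod.ext h.1 h.2), add_zero, hus p hps]
      split_ifs with h2
      · rw [hcol h2, zero_mul, add_zero]
      · rw [add_zero]

lemma inv_mul_mem_patternSubgroup_iff (hT : ∀ p ∈ T, p.1 < p.2) (hTT : T ○ T ⊆ T)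
    (hST : S ⊆ T) (hTS : T ○ S ⊆ S) {u v : (E R Λ)ˣ} (hu : u ∈ patternSubgroup R Λ T) :
    u⁻¹ * v ∈ patternSubgroup R Λ S ↔ FinitelySupportedIn S ((v : E R Λ) - (u : E R Λ)) := by
  have hSS : S ○ S ⊆ S := (SetRel.comp_subset_comp_left hST).trans hTS
  rw [mem_patternSubgroup_iff (fun p hp => hT p (hST hp)) hSS, Units.val_mul]
  have hsub : (v : E R Λ) - u = u * (((u⁻¹ : (E R Λ)ˣ) : E R Λ) * v - 1) :=
    sub_eq_mul_mul_sub_one (A := E R Λ) (Units.mul_inv u) _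
  have hinv : ((u⁻¹ : (E R Λ)ˣ) : E R Λ) * v - 1 = ((u⁻¹ : (E R Λ)ˣ) : E R Λ) * (v - u) :=
    mul_sub_one_eq_mul_sub (A := E R Λ) (Units.inv_mul u) _
  refine ⟨fun h => hsub ▸ h.mul_left ?_ hTS, fun h => hinv ▸ h.mul_left ?_ hTS⟩
  · exact (mem_patternSubgroup_iff hT hTT).mp hu
  · exact (mem_patternSubgroup_iff hT hTT).mp (inv_mem hu)

theorem patternSubgroup_subgroupOf_normal (hT : ∀ p ∈ T, p.1 < p.2) (hTT : T ○ T ⊆ T)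
    (hST : S ⊆ T) (hTS : T ○ S ⊆ S) (hST' : S ○ T ⊆ S) :
    ((patternSubgroup R Λ S).subgroupOf (patternSubgroup R Λ T)).Normal := by
  have hSS : S ○ S ⊆ S := (SetRel.comp_subset_comp_left hST).trans hTS
  refine ⟨fun n hn g => ?_⟩
  rw [Subgroup.mem_subgroupOf, mem_patternSubgroup_iff (fun p hp => hT p (hST hp)) hSS] at hn ⊢
  have hg := (mem_patternSubgroup_iff hT hTT).mp g.2
  have hg' := (mem_patternSubgroup_iff hT hTT).mp (inv_mem g.2)
  have hconj : (((g * n * g⁻¹ : patternSubgroup R Λ T) : (E R Λ)ˣ) : E R Λ) - 1 =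
      ((g : (E R Λ)ˣ) : E R Λ) * (((n : (E R Λ)ˣ) : E R Λ) - 1) *
        (((g : (E R Λ)ˣ)⁻¹ : (E R Λ)ˣ) : E R Λ) := by
    simp only [Subgroup.coe_mul, Subgroup.coe_inv, Units.val_mul]
    exact mul_mul_sub_one_eq (A := E R Λ) (Units.mul_inv _) _
  exact hconj ▸ (hn.mul_left hg hTS).mul_right hg' hST'

end Cosets

lemma index_eq_natCard_of_surjective {G X : Type*} [Group G] (K : Subgroup G) (f : G → X)
    (hf : Function.Surjective f) (hK : ∀ a b, f a = f b ↔ a⁻¹ * b ∈ K) :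
    K.index = Nat.card X := by
  rw [Subgroup.index_eq_card]
  exact Nat.card_congr ((Quotient.congrRight fun a b =>
    QuotientGroup.leftRel_apply.trans ((hK a b).symm.trans Setoid.ker_def.symm)).trans
      (Setoid.quotientKerEquivOfSurjective f hf))

section Index

variable {R : Type*} [Ring R] {Λ : Type*} [LinearOrder Λ] {S Ω : Set (Λ × Λ)}

theorem index_patternSubgroup_subgroupOf [Finite R] (hT : ∀ p ∈ S ∪ Ω, p.1 < p.2)
    (hTT : (S ∪ Ω) ○ (S ∪ Ω) ⊆ S ∪ Ω) (hTS : (S ∪ Ω) ○ S ⊆ S) (hSΩ : Disjoint S Ω)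
    (hΩ : Ω.Finite) :
    ((patternSubgroup R Λ S).subgroupOf (patternSubgroup R Λ (S ∪ Ω))).index =
      Nat.card R ^ Nat.card Ω := by
  classical
  have := hΩ.to_subtype
  have hmem := fun u : patternSubgroup R Λ (S ∪ Ω) => (mem_patternSubgroup_iff hT hTT).mp u.2
  rw [index_eq_natCard_of_surjective _ (fun (u : patternSubgroup R Λ (S ∪ Ω)) (p : Ω) =>
    ent (((u : (E R Λ)ˣ) : E R Λ) - 1) p.1.1 p.1.2), Nat.card_fun]
  · intro g
    obtain ⟨u, hu, hug⟩ := exists_mem_patternSubgroup_ent_eq hT hTT hΩ.toFinset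
      (by simp) fun p => if hp : p ∈ Ω then g ⟨p, hp⟩ else 0
    exact ⟨⟨u, hu⟩, funext fun p => by simp [hug p (hΩ.mem_toFinset.mpr p.2)]⟩
  · intro u v
    have hvu : ((v : (E R Λ)ˣ) : E R Λ) - ((u : (E R Λ)ˣ) : E R Λ) =
        (((v : (E R Λ)ˣ) : E R Λ) - 1) - (((u : (E R Λ)ˣ) : E R Λ) - 1) :=
      (sub_sub_sub_cancel_right (G := E R Λ) _ _ _).symm
    rw [Subgroup.mem_subgroupOf, Subgroup.coe_mul, Subgroup.coe_inv,
      inv_mul_mem_patternSubgroup_iff hT hTT Set.subset_union_left hTS u.2, hvu,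
      finitelySupportedIn_sub_iff (hmem u) (hmem v) hSΩ, funext_iff, Subtype.forall]

end Index

section BasicSet

variable {Λ : Type*} [LinearOrder Λ] (D : Finset (Λ × Λ))

/-- `Γ = Φ \ ⋃_{(α,β) ∈ D} [α,→,β)`. -/
def gammaPattern : Set (Λ × Λ) := {p | p.1 < p.2 ∧ ¬ ∃ q ∈ D, p.1 = q.1 ∧ p.2 < q.2}

/-- `Ω = {(α,γ) : ∃ (α,β),(γ,δ) ∈ D, α < γ < β < δ}`. -/
def omegaPattern : Set (Λ × Λ) :=
  {p | p.1 < p.2 ∧ ∃ β δ : Λ, (p.1, β) ∈ D ∧ (p.2, δ) ∈ D ∧ p.2 < β ∧ β < δ}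

lemma gammaPattern_comp_subset {T : Set (Λ × Λ)} (hT : ∀ p ∈ T, p.1 < p.2) :
    gammaPattern D ○ T ⊆ gammaPattern D := by
  rintro ⟨a, c⟩ ⟨b, ⟨hab, hb⟩, hbc⟩
  refine ⟨hab.trans (hT _ hbc), fun ⟨q, hq, hq1, hq2⟩ => hb ⟨q, hq, hq1, ?_⟩⟩
  exact (hT _ hbc).trans hq2

lemma disjoint_gammaPattern_omegaPattern : Disjoint (gammaPattern D) (omegaPattern D) :=
  Set.disjoint_left.mpr fun p ⟨_, hp⟩ ⟨_, β, _, hpβ, _, hβ, _⟩ => hp ⟨(p.1, β), hpβ, rfl, hβ⟩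

lemma omegaPattern_finite : (omegaPattern D).Finite := by
  refine (D.image Prod.fst ×ˢ D.image Prod.fst).finite_toSet.subset ?_
  rintro p ⟨-, β, δ, hβ, hδ, -, -⟩
  simp only [Finset.coe_product, Set.mem_prod, Finset.mem_coe, Finset.mem_image]
  exact ⟨⟨_, hβ, rfl⟩, ⟨_, hδ, rfl⟩⟩

variable {D}

lemma omegaPattern_comp_gammaPattern_subset (hD : ∀ p ∈ D, ∀ q ∈ D, p.1 = q.1 → p = q) :
    omegaPattern D ○ gammaPattern D ⊆ gammaPattern D := by
  rintro ⟨a, c⟩ ⟨b, ⟨hab, β, δ, haβ, hbδ, -, hβδ⟩, hbc, hb⟩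
  refine ⟨hab.trans hbc, fun ⟨q, hq, hq1, hq2⟩ => hb ⟨(b, δ), hbδ, rfl, ?_⟩⟩
  rw [hD q hq (a, β) haβ hq1.symm] at hq2
  exact hq2.trans hβδ

lemma omegaPattern_comp_omegaPattern_subset (hD : ∀ p ∈ D, ∀ q ∈ D, p.1 = q.1 → p = q) :
    omegaPattern D ○ omegaPattern D ⊆ gammaPattern D ∪ omegaPattern D := by
  rintro ⟨a, c⟩ ⟨b, ⟨hab, β, δ, haβ, hbδ, -, hβδ⟩, hbc, β', δ', hbβ', hcδ', -, hβ'δ'⟩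
  have hδ : δ = β' := congrArg Prod.snd (hD _ hbδ _ hbβ' rfl)
  by_cases hc : c < β
  · exact Or.inr ⟨hab.trans hbc, β, δ', haβ, hcδ', hc, hβδ.trans (hδ ▸ hβ'δ')⟩
  · refine Or.inl ⟨hab.trans hbc, fun ⟨q, hq, hq1, hq2⟩ => hc ?_⟩
    rwa [hD q hq (a, β) haβ hq1.symm] at hq2

lemma union_comp_gammaPattern_subset (hD : ∀ p ∈ D, ∀ q ∈ D, p.1 = q.1 → p = q) :
    (gammaPattern D ∪ omegaPattern D) ○ gammaPattern D ⊆ gammaPattern D := by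
  rintro p ⟨b, hb | hb, hbc⟩
  · exact gammaPattern_comp_subset D (fun q hq => hq.1) ⟨b, hb, hbc⟩
  · exact omegaPattern_comp_gammaPattern_subset hD ⟨b, hb, hbc⟩

lemma union_comp_union_subset (hD : ∀ p ∈ D, ∀ q ∈ D, p.1 = q.1 → p = q) :
    (gammaPattern D ∪ omegaPattern D) ○ (gammaPattern D ∪ omegaPattern D) ⊆
      gammaPattern D ∪ omegaPattern D := by
  rintro p ⟨b, hb | hb, hbc⟩
  · exact Or.inl (gammaPattern_comp_subset D (fun q hq => hq.elim (·.1) (·.1)) ⟨b, hb, hbc⟩)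
  · rcases hbc with hbc | hbc
    · exact Or.inl (omegaPattern_comp_gammaPattern_subset hD ⟨b, hb, hbc⟩)
    · exact omegaPattern_comp_omegaPattern_subset hD ⟨b, hb, hbc⟩

end BasicSet

theorem patternSubgroup_normal_and_index_general (R : Type*) [Ring R]
    (Λ : Type*) [LinearOrder Λ] (D : Finset (Λ × Λ))
    (hbasic₁ : ∀ p ∈ D, ∀ q ∈ D, p.1 = q.1 → p = q)
    (Γ Ω : Set (Λ × Λ))
    (hΓ : Γ = {p : Λ × Λ | p.1 < p.2 ∧ ¬ ∃ q ∈ D, p.1 = q.1 ∧ p.2 < q.2})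
    (hΩ : Ω = {p : Λ × Λ | p.1 < p.2 ∧
      ∃ β δ : Λ, (p.1, β) ∈ D ∧ (p.2, δ) ∈ D ∧ p.2 < β ∧ β < δ}) :
    ((patternSubgroup R Λ Γ).subgroupOf (patternSubgroup R Λ (Γ ∪ Ω))).Normal ∧
      (∀ _ : Finite R,
        ((patternSubgroup R Λ Γ).subgroupOf (patternSubgroup R Λ (Γ ∪ Ω))).index =
          Nat.card R ^ Nat.card Ω) := by
  obtain rfl : Γ = gammaPattern D := hΓ
  obtain rfl : Ω = omegaPattern D := hΩ
  have hstrict : ∀ p ∈ gammaPattern D ∪ omegaPattern D, p.1 < p.2 := fun p hp =>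
    hp.elim (·.1) (·.1)
  have hTT := union_comp_union_subset hbasic₁
  have hTΓ := union_comp_gammaPattern_subset hbasic₁
  exact ⟨patternSubgroup_subgroupOf_normal hstrict hTT Set.subset_union_left hTΓ
      (gammaPattern_comp_subset D hstrict),
    fun _ => index_patternSubgroup_subgroupOf hstrict hTT hTΓ
      (disjoint_gammaPattern_omegaPattern D) (omegaPattern_finite D)⟩

/-- Let `Λ` be totally ordered, `D` a basic subset of `Φ`, and let
`Γ = Φ \ ⋃_{(α,β) ∈ D} [α,→,β)`, `Ω = {(α,γ) : ∃ (α,β),(γ,δ) ∈ D, α < γ < β < δ}`,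
`Γ₁ = Γ ∪ Ω`.  Then `H = M(Γ)` is a normal subgroup of `I = M(Γ₁)`, and if `R` is
finite then `[I : H] = |R|^{|Ω|}`. -/
theorem patternSubgroup_normal_and_index (R : Type*) [Ring R] [Nontrivial R]
    (Λ : Type*) [LinearOrder Λ] (D : Finset (Λ × Λ))
    (hD : ∀ p ∈ D, p.1 < p.2)
    (hbasic₁ : ∀ p ∈ D, ∀ q ∈ D, p.1 = q.1 → p = q)
    (hbasic₂ : ∀ p ∈ D, ∀ q ∈ D, p.2 = q.2 → p = q)
    (Γ Ω : Set (Λ × Λ))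
    (hΓ : Γ = {p : Λ × Λ | p.1 < p.2 ∧ ¬ ∃ q ∈ D, p.1 = q.1 ∧ p.2 < q.2})
    (hΩ : Ω = {p : Λ × Λ | p.1 < p.2 ∧
      ∃ β δ : Λ, (p.1, β) ∈ D ∧ (p.2, δ) ∈ D ∧ p.2 < β ∧ β < δ}) :
    ((patternSubgroup R Λ Γ).subgroupOf (patternSubgroup R Λ (Γ ∪ Ω))).Normal ∧
      (∀ _ : Finite R,
        ((patternSubgroup R Λ Γ).subgroupOf (patternSubgroup R Λ (Γ ∪ Ω))).index =
          Nat.card R ^ Nat.card Ω) :=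
  patternSubgroup_normal_and_index_general R Λ D hbasic₁ Γ Ω hΓ hΩ

end McLain
end
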